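/- arXiv:1805.08492 — 2 statements merged into one kernel-verified Lean document; each statement's English description precedes it below -/
import Mathlib

section
/- Let d ≥ 1 and let x be a random vector in ℝ^d distributed according to the standard Gaussian measure N(0, I_d). For every nonzero vector w ∈ ℝ^d and every vector v ∈ ℝ^d, the expectation E[ 1{⟨w,x⟩ > 0} · ⟨v,x⟩ · x ] equals (1/2) v. -/
/-!
The reflection `y ↦ -y` preserves `N(0, I_d)`, exchanges the half-spaces `⟪w, y⟫ > 0` and
`⟪w, y⟫ < 0`, and fixes the integrand `⟪v, y⟫ • y`. The hyperplane `⟪w, y⟫ = 0` between them is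
null, because `⟪w, x⟫ ~ N(0, ‖w‖²)` with `‖w‖ ≠ 0`. Hence the integral over the half-space is
half of `E[⟪v, x⟫ • x]`, and the latter is `v` because the covariance of `N(0, I_d)` is the
inner product.
-/

open MeasureTheory ProbabilityTheory Real
open scoped RealInnerProductSpace

/-- The standard Gaussian measure `N(0, I_d)` on `ℝ^d`, i.e. the product of `d`
standard Gaussian measures on `EuclideanSpace ℝ (Fin d)`. -/
noncomputable def stdGaussian (d : ℕ) : Measure (EuclideanSpace ℝ (Fin d)) :=
  (Measure.pi fun _ : Fin d => gaussianReal 0 1).map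
    (MeasurableEquiv.toLp 2 (Fin d → ℝ))

section NegInvariant

variable {G F : Type*} [MeasurableSpace G] [AddGroup G] [MeasurableNeg G]
  [NormedAddCommGroup F] [NormedSpace ℝ F] {μ : Measure G} [μ.IsNegInvariant]

theorem integral_indicator_pos_eq_half_integral {g : G → ℝ} (hg : Measurable g)
    (hg_odd : ∀ x, g (-x) = -g x) (hg_zero : μ {x | g x = 0} = 0) {f : G → F}
    (hf : Integrable f μ) (hf_even : ∀ x, f (-x) = f x) :
    ∫ x, {x | 0 < g x}.indicator f x ∂μ = (1 / 2 : ℝ) • ∫ x, f x ∂μ := by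
  have h_reflect :
      ∫ x, {x | 0 < g x}.indicator f x ∂μ = ∫ x, {x | g x < 0}.indicator f x ∂μ := by
    rw [← integral_neg_eq_self]
    congr 1 with x
    simp [Set.indicator_apply, hg_odd, hf_even]
  have h_split : ∫ x, {x | 0 < g x}.indicator f x ∂μ + ∫ x, {x | g x < 0}.indicator f x ∂μ
      = ∫ x, f x ∂μ := by
    have h_pos : MeasurableSet {x | 0 < g x} := hg measurableSet_Ioi
    have h_neg : MeasurableSet {x | g x < 0} := hg measurableSet_Iio
    rw [← integral_add (hf.indicator h_pos) (hf.indicator h_neg)]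
    refine integral_congr_ae ?_
    filter_upwards [measure_eq_zero_iff_ae_notMem.1 hg_zero] with x hx
    rcases lt_or_gt_of_ne (hx : g x ≠ 0) with h | h <;> simp [h, h.not_gt]
  rw [← h_split, ← h_reflect, ← two_smul ℝ, smul_smul]
  norm_num

end NegInvariant

namespace ProbabilityTheory

variable {E : Type*} [NormedAddCommGroup E] [InnerProductSpace ℝ E] [FiniteDimensional ℝ E]
  [MeasurableSpace E] [BorelSpace E]

instance isNegInvariant_stdGaussian : (stdGaussian E).IsNegInvariant :=
  ⟨stdGaussian_map (LinearIsometryEquiv.neg ℝ)⟩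

lemma map_inner_stdGaussian (w : E) :
    (stdGaussian E).map (⟪w, ·⟫) = gaussianReal 0 (‖w‖₊ ^ 2) := by
  have := IsGaussian.map_eq_gaussianReal (μ := stdGaussian E) (innerSL ℝ w)
  rw [integral_strongDual_stdGaussian, variance_dual_stdGaussian, innerSL_apply_norm] at this
  refine this.trans (congrArg _ ?_)
  ext
  simp

lemma stdGaussian_inner_eq_zero {w : E} (hw : w ≠ 0) :
    stdGaussian E {y | ⟪w, y⟫ = 0} = 0 := by
  have hmeas : Measurable (⟪w, ·⟫ : E → ℝ) := by fun_prop
  rw [show {y | ⟪w, y⟫ = 0} = (⟪w, ·⟫) ⁻¹' {0} from rfl,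
    ← Measure.map_apply hmeas (measurableSet_singleton 0), map_inner_stdGaussian]
  exact gaussianReal_absolutelyContinuous 0 (pow_ne_zero 2 (nnnorm_ne_zero_iff.2 hw))
    (measure_singleton 0)

lemma integrable_inner_smul_stdGaussian (v : E) :
    Integrable (fun y ↦ ⟪v, y⟫ • y) (stdGaussian E) := by
  rw [← memLp_one_iff_integrable]
  exact (IsGaussian.memLp_id _ 2 (by simp)).smul (p := 2) (q := 2)
    (IsGaussian.memLp_dual _ (innerSL ℝ v) 2 (by simp))

lemma integral_inner_smul_stdGaussian (v : E) :
    ∫ y, ⟪v, y⟫ • y ∂(stdGaussian E) = v := by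
  refine ext_inner_left ℝ fun u ↦ ?_
  calc ⟪u, ∫ y, ⟪v, y⟫ • y ∂(stdGaussian E)⟫
      = ∫ y, ⟪v, y⟫ * ⟪u, y⟫ ∂(stdGaussian E) := by
        rw [← integral_inner (integrable_inner_smul_stdGaussian v)]
        simp only [inner_smul_right]
    _ = covarianceBilin (stdGaussian E) v u := by
        simp [covarianceBilin_apply IsGaussian.memLp_two_id, integral_id_stdGaussian]
    _ = ⟪u, v⟫ := by
        rw [covarianceBilin_stdGaussian, innerSL_apply_apply, real_inner_comm]

end ProbabilityTheory

theorem stmt_0_general (d : ℕ) (w v : EuclideanSpace ℝ (Fin d)) (hw : w ≠ 0) :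
    ∫ x, ({y : EuclideanSpace ℝ (Fin d) | 0 < ⟪w, y⟫}.indicator
        (fun y => ⟪v, y⟫ • y)) x ∂(stdGaussian d) = (1 / 2 : ℝ) • v := by
  rw [show stdGaussian d = ProbabilityTheory.stdGaussian _ from map_pi_eq_stdGaussian,
    integral_indicator_pos_eq_half_integral (by fun_prop) (fun y ↦ inner_neg_right w y)
      (stdGaussian_inner_eq_zero hw) (integrable_inner_smul_stdGaussian v)
      (fun y ↦ by simp only [inner_neg_right, neg_smul, smul_neg, neg_neg]),
    integral_inner_smul_stdGaussian]

/-- For `x ~ N(0, I_d)` and `w ≠ 0`,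
`E[ 1_{⟨w,x⟩ > 0} ⟨v,x⟩ x ] = (1/2) v`. -/
theorem stmt_0 (d : ℕ) (hd : 1 ≤ d) (w v : EuclideanSpace ℝ (Fin d)) (hw : w ≠ 0) :
    ∫ x, ({y : EuclideanSpace ℝ (Fin d) | 0 < ⟪w, y⟫}.indicator
        (fun y => ⟪v, y⟫ • y)) x ∂(stdGaussian d) = (1 / 2 : ℝ) • v :=
  stmt_0_general d w v hw
end

section
/- (Lemma 2, Lyapunov descent.) Let w, w* ∈ ℝ^d be nonzero with ‖w − w*‖ < ‖w*‖, let θ = arccos(⟨w,w*⟩/(‖w‖‖w*‖)) ∈ [0,π], and define Δw = (1/2)(w* − w) + (1/(2π)) · ( ‖w*‖ (sin θ) (w/‖w‖) − θ w* ). Then for the Lyapunov function V(w) = (1/2)‖w − w*‖², its derivative along the expected dynamics satisfies V̇ = ⟨w − w*, Δw⟩ ≤ 0. -/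
open Real
open scoped RealInnerProductSpace

/-!
Write `v = w - w*` and `u = ‖w*‖ sin θ · w/‖w‖ - θ w*`, so that `⟪v, Δw⟫ = -‖v‖²/2 + ⟪v, u⟫/(2π)`.
The ball condition forces `⟪w, w*⟫ > 0`, i.e. `θ ≤ π/2`, so Jordan's inequality `θ ≤ (π/2) sin θ`
and the triangle inequality give `‖u‖ ≤ (1 + π/2) ‖w*‖ sin θ ≤ π ‖w*‖ sin θ`. Since `‖w*‖ sin θ` is
the distance from `w*` to the line through `w`, it is at most `‖v‖`, and Cauchy–Schwarz yields
`⟪v, u⟫ ≤ π ‖v‖²`.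
-/

namespace InnerProductGeometry

variable {V : Type*} [NormedAddCommGroup V] [InnerProductSpace ℝ V]

theorem real_inner_pos_of_norm_sub_lt_norm {x y : V} (h : ‖x - y‖ < ‖y‖) : 0 < ⟪x, y⟫ := by
  have hsq : ‖x - y‖ ^ 2 < ‖y‖ ^ 2 := pow_lt_pow_left₀ h (norm_nonneg _) two_ne_zero
  rw [norm_sub_sq_real] at hsq
  nlinarith [sq_nonneg ‖x‖]

theorem angle_le_pi_div_two_of_norm_sub_lt_norm {x y : V} (h : ‖x - y‖ < ‖y‖) :
    angle x y ≤ π / 2 :=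
  Real.arccos_le_pi_div_two.mpr <|
    div_nonneg (real_inner_pos_of_norm_sub_lt_norm h).le (by positivity)

theorem norm_mul_sin_angle_le_norm_sub (x y : V) : ‖y‖ * sin (angle x y) ≤ ‖x - y‖ := by
  have hcos := norm_sub_sq_eq_norm_sq_add_norm_sq_sub_two_mul_norm_mul_norm_mul_cos_angle x y
  have hsq : (‖y‖ * sin (angle x y)) ^ 2 ≤ ‖x - y‖ ^ 2 := by
    nlinarith [sin_sq_add_cos_sq (angle x y), sq_nonneg (‖x‖ - ‖y‖ * cos (angle x y))]
  exact abs_le_of_sq_le_sq' hsq (norm_nonneg _) |>.2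

end InnerProductGeometry

section

variable {V : Type*} [NormedAddCommGroup V] [NormedSpace ℝ V]

theorem norm_smul_sin_sub_smul_le {θ : ℝ} (hθ₀ : 0 ≤ θ) (hθ : θ ≤ π / 2) {z : V} (hz : ‖z‖ ≤ 1)
    (y : V) : ‖(‖y‖ * sin θ) • z - θ • y‖ ≤ π * (‖y‖ * sin θ) := by
  have hsin : 0 ≤ sin θ := sin_nonneg_of_nonneg_of_le_pi hθ₀ (hθ.trans (by linarith [pi_pos]))
  have hjordan : θ ≤ π / 2 * sin θ := by
    have := mul_le_sin hθ₀ hθ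
    rw [div_mul_eq_mul_div, div_le_iff₀ pi_pos] at this
    linarith
  calc ‖(‖y‖ * sin θ) • z - θ • y‖
      ≤ ‖y‖ * sin θ * ‖z‖ + θ * ‖y‖ := by
        refine (norm_sub_le _ _).trans_eq ?_
        rw [norm_smul, norm_smul, norm_of_nonneg (by positivity), norm_of_nonneg hθ₀]
    _ ≤ ‖y‖ * sin θ * 1 + π / 2 * sin θ * ‖y‖ := by gcongr
    _ ≤ π * (‖y‖ * sin θ) := by nlinarith [pi_gt_three, mul_nonneg (norm_nonneg y) hsin]

theorem norm_inv_norm_smul_le_one (x : V) : ‖‖x‖⁻¹ • x‖ ≤ 1 := by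
  rw [norm_smul, norm_inv, norm_norm]
  exact inv_mul_le_one_of_le₀ le_rfl (norm_nonneg _)

end

open InnerProductGeometry in
theorem stmt_10_general (d : ℕ) (w wstar : EuclideanSpace ℝ (Fin d))
    (hball : ‖w - wstar‖ < ‖wstar‖)
    (θ : ℝ) (hθ : θ = Real.arccos (⟪w, wstar⟫ / (‖w‖ * ‖wstar‖)))
    (Δw : EuclideanSpace ℝ (Fin d))
    (hΔw : Δw = (1 / 2 : ℝ) • (wstar - w)
        + (1 / (2 * π)) • ((‖wstar‖ * Real.sin θ) • (‖w‖⁻¹ • w) - θ • wstar)) :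
    ⟪w - wstar, Δw⟫ ≤ 0 := by
  replace hθ : θ = angle w wstar := hθ
  set u := (‖wstar‖ * sin θ) • (‖w‖⁻¹ • w) - θ • wstar
  have hu : ‖u‖ ≤ π * ‖w - wstar‖ := by
    refine (norm_smul_sin_sub_smul_le (hθ ▸ angle_nonneg w wstar)
      (hθ ▸ angle_le_pi_div_two_of_norm_sub_lt_norm hball) (norm_inv_norm_smul_le_one w)
      wstar).trans ?_
    gcongr
    exact hθ ▸ norm_mul_sin_angle_le_norm_sub w wstar
  have hvu : ⟪w - wstar, u⟫ ≤ π * ‖w - wstar‖ ^ 2 := by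
    calc ⟪w - wstar, u⟫ ≤ ‖w - wstar‖ * ‖u‖ := real_inner_le_norm _ _
      _ ≤ ‖w - wstar‖ * (π * ‖w - wstar‖) := by gcongr
      _ = π * ‖w - wstar‖ ^ 2 := by ring
  have hsplit :
      ⟪w - wstar, Δw⟫ = -(1 / 2) * ‖w - wstar‖ ^ 2 + 1 / (2 * π) * ⟪w - wstar, u⟫ := by
    rw [hΔw, inner_add_right, real_inner_smul_right, real_inner_smul_right, ← neg_sub w wstar,
      inner_neg_right, real_inner_self_eq_norm_sq]
    ring
  rw [hsplit]
  field_simp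
  linarith

/-- Lemma 2 (Lyapunov descent): for nonzero `w, w*` with `‖w - w*‖ < ‖w*‖`,
the Lyapunov derivative `V̇ = ⟨w - w*, Δw⟩` along the expected dynamics
`Δw = (1/2)(w* - w) + (1/(2π))(‖w*‖ (sin θ)(w/‖w‖) - θ w*)` is nonpositive. -/
theorem stmt_10 (d : ℕ) (w wstar : EuclideanSpace ℝ (Fin d))
    (hw : w ≠ 0) (hwstar : wstar ≠ 0) (hball : ‖w - wstar‖ < ‖wstar‖)
    (θ : ℝ) (hθ : θ = Real.arccos (⟪w, wstar⟫ / (‖w‖ * ‖wstar‖)))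
    (Δw : EuclideanSpace ℝ (Fin d))
    (hΔw : Δw = (1 / 2 : ℝ) • (wstar - w)
        + (1 / (2 * π)) • ((‖wstar‖ * Real.sin θ) • (‖w‖⁻¹ • w) - θ • wstar)) :
    ⟪w - wstar, Δw⟫ ≤ 0 :=
  stmt_10_general d w wstar hball θ hθ Δw hΔw
end
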